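/- arXiv:1704.05043 — 3 statements merged into one kernel-verified Lean document; each statement's English description precedes it below -/
import Mathlib

section
/- Let V be a finite-dimensional real vector space and {P_I}_{I ⊆ Fin N} linear maps with P_I P_J = P_{I∩J} and P_∅ = 0. Define ω_I := Σ_{Ĩ⊆I} (-1)^{|I|+|Ĩ|} P_{Ĩ}. Then the ω_I are mutually orthogonal idempotents: ω_I ∘ ω_J = 0 whenever I ≠ J, and ω_I ∘ ω_I = ω_I. -/
open Finset

variable {V : Type*} [AddCommGroup V] [Module ℝ V] {N : ℕ}

/-- The coherence operator `ω_I := Σ_{Ĩ ⊆ I} (-1)^(|I|+|Ĩ|) P_Ĩ`. -/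
def omegaOp (P : Finset (Fin N) → (V →ₗ[ℝ] V)) (I : Finset (Fin N)) : V →ₗ[ℝ] V :=
  ∑ J ∈ I.powerset, ((-1 : ℝ) ^ (I.card + J.card)) • P J

lemma aux_alt_sum {α : Type*} [DecidableEq α] (x : Finset α) :
    (∑ m ∈ x.powerset, (-1 : ℝ) ^ m.card) = if x = ∅ then 1 else 0 := by
  have := Finset.sum_powerset_neg_one_pow_card (x := x)
  have h : ((∑ m ∈ x.powerset, (-1 : ℤ) ^ m.card : ℤ) : ℝ)
      = ∑ m ∈ x.powerset, (-1 : ℝ) ^ m.card := by push_cast; ring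
  rw [← h, this]
  split_ifs <;> norm_num

lemma sum_comp' {ι : Type*} (s : Finset ι) (g : ι → (V →ₗ[ℝ] V)) (f : V →ₗ[ℝ] V) :
    (∑ i ∈ s, g i) ∘ₗ f = ∑ i ∈ s, g i ∘ₗ f := by
  ext v; simp [LinearMap.sum_apply]

lemma comp_sum' {ι : Type*} (s : Finset ι) (f : V →ₗ[ℝ] V) (g : ι → (V →ₗ[ℝ] V)) :
    f ∘ₗ (∑ i ∈ s, g i) = ∑ i ∈ s, f ∘ₗ g i := by
  ext v; simp [LinearMap.sum_apply]

lemma omega_comp_P (P : Finset (Fin N) → (V →ₗ[ℝ] V))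
    (hcomp : ∀ I J, P I ∘ₗ P J = P (I ∩ J)) (I B : Finset (Fin N)) :
    omegaOp P I ∘ₗ P B = if I ⊆ B then omegaOp P I else 0 := by
  unfold omegaOp
  rw [sum_comp']
  simp only [LinearMap.smul_comp, hcomp]
  have key : ∑ A ∈ I.powerset, ((-1:ℝ)) ^ (I.card + A.card) • P (A ∩ B)
      = ∑ p ∈ (I ∩ B).powerset ×ˢ (I \ B).powerset,
          ((-1:ℝ)) ^ (I.card + p.1.card + p.2.card) • P p.1 := by
    refine Finset.sum_nbij' (fun A => (A ∩ B, A \ B)) (fun p => p.1 ∪ p.2) ?_ ?_ ?_ ?_ ?_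
    · intro A hA
      simp only [mem_powerset] at hA
      simp only [mem_product, mem_powerset]
      constructor
      · exact inter_subset_inter hA (subset_refl B)
      · exact sdiff_subset_sdiff hA (subset_refl B)
    · intro p hp
      simp only [mem_product, mem_powerset] at hp
      simp only [mem_powerset]
      exact union_subset (hp.1.trans inter_subset_left) (hp.2.trans sdiff_subset)
    · intro A hA
      show A ∩ B ∪ A \ B = A
      ext a; simp only [mem_union, mem_inter, mem_sdiff]; tauto
    · intro p hp
      simp only [mem_product, mem_powerset] at hp
      have h1 : (p.1 ∪ p.2) ∩ B = p.1 := by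
        rw [union_inter_distrib_right]
        have : p.2 ∩ B = ∅ := by
          apply eq_empty_of_forall_notMem
          intro a ha
          simp only [mem_inter] at ha
          exact (mem_sdiff.mp (hp.2 ha.1)).2 ha.2
        rw [this, union_empty, inter_eq_left]
        exact hp.1.trans inter_subset_right
      have h2 : (p.1 ∪ p.2) \ B = p.2 := by
        rw [union_sdiff_distrib]
        have h3 : p.1 \ B = ∅ := by
          rw [sdiff_eq_empty_iff_subset]
          exact hp.1.trans inter_subset_right
        have h4 : p.2 \ B = p.2 := by
          rw [Finset.sdiff_eq_self_iff_disjoint]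
          exact disjoint_left.mpr fun a ha hb => (mem_sdiff.mp (hp.2 ha)).2 hb
        rw [h3, h4, empty_union]
      simp [h1, h2]
    · intro A hA
      have hdisj : Disjoint (A ∩ B) (A \ B) :=
        disjoint_left.mpr fun a ha hb => (mem_sdiff.mp hb).2 (mem_inter.mp ha).2
      have hcard : (A ∩ B).card + (A \ B).card = A.card := by
        have hu : A ∩ B ∪ A \ B = A := by
          ext a; simp only [mem_union, mem_inter, mem_sdiff]; tauto
        rw [← card_union_of_disjoint hdisj, hu]
      simp only []
      rw [← hcard, ← add_assoc]
  rw [key, Finset.sum_product]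
  have step : ∀ C ∈ (I ∩ B).powerset,
      (∑ D ∈ (I \ B).powerset, ((-1:ℝ)) ^ (I.card + C.card + D.card) • P C)
      = (if I \ B = ∅ then 1 else 0 : ℝ) • (((-1:ℝ)) ^ (I.card + C.card) • P C) := by
    intro C _
    rw [← aux_alt_sum, Finset.sum_smul]
    refine Finset.sum_congr rfl fun D _ => ?_
    rw [smul_smul, ← pow_add]
    ring_nf
  rw [Finset.sum_congr rfl step, ← Finset.smul_sum]
  by_cases h : I ⊆ B
  · have h1 : I \ B = ∅ := sdiff_eq_empty_iff_subset.mpr h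
    have h2 : I ∩ B = I := inter_eq_left.mpr h
    rw [if_pos h, h1, h2, if_pos rfl, one_smul]
  · have h1 : I \ B ≠ ∅ := fun he => h (sdiff_eq_empty_iff_subset.mp he)
    rw [if_neg h, if_neg h1, zero_smul]

lemma omega_comp_omega (P : Finset (Fin N) → (V →ₗ[ℝ] V))
    (hcomp : ∀ I J, P I ∘ₗ P J = P (I ∩ J)) (I J : Finset (Fin N)) :
    omegaOp P I ∘ₗ omegaOp P J = if I = J then omegaOp P I else 0 := by
  conv_lhs => rw [show omegaOp P J = ∑ B ∈ J.powerset, ((-1 : ℝ) ^ (J.card + B.card)) • P B from rfl]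
  rw [comp_sum']
  simp only [LinearMap.comp_smul, omega_comp_P P hcomp]
  have split : ∑ B ∈ J.powerset, ((-1:ℝ)) ^ (J.card + B.card) •
        (if I ⊆ B then omegaOp P I else 0)
      = ∑ B ∈ J.powerset.filter (fun B => I ⊆ B), ((-1:ℝ)) ^ (J.card + B.card) • omegaOp P I := by
    rw [Finset.sum_filter]
    refine Finset.sum_congr rfl fun B _ => ?_
    split_ifs <;> simp
  rw [split, ← Finset.sum_smul]
  by_cases hIJ : I ⊆ J
  · have key : (∑ B ∈ J.powerset.filter (fun B => I ⊆ B), ((-1:ℝ)) ^ (J.card + B.card))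
        = ∑ D ∈ (J \ I).powerset, ((-1:ℝ)) ^ (J.card + I.card + D.card) := by
      refine Finset.sum_nbij' (fun B => B \ I) (fun D => I ∪ D) ?_ ?_ ?_ ?_ ?_
      · intro B hB
        simp only [mem_filter, mem_powerset] at hB
        exact mem_powerset.mpr (sdiff_subset_sdiff hB.1 (subset_refl I))
      · intro D hD
        simp only [mem_powerset] at hD
        simp only [mem_filter, mem_powerset]
        exact ⟨union_subset hIJ (hD.trans sdiff_subset), subset_union_left⟩
      · intro B hB
        simp only [mem_filter, mem_powerset] at hB
        exact union_sdiff_of_subset hB.2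
      · intro D hD
        simp only [mem_powerset] at hD
        show (I ∪ D) \ I = D
        rw [union_sdiff_cancel_left]
        exact disjoint_left.mpr fun a ha hd => (mem_sdiff.mp (hD hd)).2 ha
      · intro B hB
        simp only [mem_filter, mem_powerset] at hB
        have hc : I.card + (B \ I).card = B.card := by
          rw [← card_union_of_disjoint (disjoint_sdiff), union_sdiff_of_subset hB.2]
        rw [← hc, ← add_assoc]
    rw [key]
    have : (∑ D ∈ (J \ I).powerset, ((-1:ℝ)) ^ (J.card + I.card + D.card))
        = ((-1:ℝ)) ^ (J.card + I.card) * ∑ D ∈ (J \ I).powerset, ((-1:ℝ)) ^ D.card := by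
      rw [Finset.mul_sum]
      exact Finset.sum_congr rfl fun D _ => by rw [← pow_add]
    rw [this, aux_alt_sum]
    by_cases heq : I = J
    · subst heq
      simp
    · have hne : J \ I ≠ ∅ := by
        intro he
        exact heq (subset_antisymm hIJ (sdiff_eq_empty_iff_subset.mp he))
      rw [if_neg hne, if_neg heq, mul_zero, zero_smul]
  · have hempty : J.powerset.filter (fun B => I ⊆ B) = ∅ := by
      apply Finset.filter_eq_empty_iff.mpr
      intro B hB hIB
      exact hIJ (hIB.trans (mem_powerset.mp hB))
    have hne : I ≠ J := fun h => hIJ (h ▸ subset_refl I)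
    rw [hempty, if_neg hne]
    simp

/-- The coherence operators associated to a family of slit projectors with
`P_I P_J = P_{I∩J}` and `P_∅ = 0` are mutually orthogonal idempotents. -/
theorem omega_orthogonal_idempotents
    (P : Finset (Fin N) → (V →ₗ[ℝ] V))
    (hcomp : ∀ I J, P I ∘ₗ P J = P (I ∩ J))
    (hzero : P ∅ = 0) :
    (∀ I J : Finset (Fin N), I ≠ J → omegaOp P I ∘ₗ omegaOp P J = 0) ∧
    (∀ I : Finset (Fin N), omegaOp P I ∘ₗ omegaOp P I = omegaOp P I) := by
  constructor
  · intro I J hne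
    rw [omega_comp_omega P hcomp, if_neg hne]
  · intro I
    rw [omega_comp_omega P hcomp, if_pos rfl]
end

section
/- In quantum theory (complex Hilbert space ℂ^N with the computational basis), define P_I on N×N complex matrices by (P_I ρ)_{ij} = ρ_{ij} if i∈I and j∈I, and 0 otherwise. Then P_I P_J = P_{I∩J}, each P_I is idempotent, and the coherence operator ω_I := Σ_{Ĩ⊆I}(-1)^{|I|+|Ĩ|}P_{Ĩ} vanishes whenever |I| ≥ 3. Hence quantum theory has maximal order of interference 2. -/
open Finset

/-- The slit projector `P_I` on `N×N` complex matrices: keep entry `ρ i j`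
iff `i ∈ I` and `j ∈ I`. -/
def slitProj {N : ℕ} (I : Finset (Fin N)) (ρ : Matrix (Fin N) (Fin N) ℂ) :
    Matrix (Fin N) (Fin N) ℂ :=
  Matrix.of fun i j => if i ∈ I ∧ j ∈ I then ρ i j else 0

/-- The coherence operator `ω_I := Σ_{Ĩ ⊆ I} (-1)^(|I|+|Ĩ|) P_Ĩ`. -/
noncomputable def omegaMat {N : ℕ} (I : Finset (Fin N)) (ρ : Matrix (Fin N) (Fin N) ℂ) :
    Matrix (Fin N) (Fin N) ℂ :=
  ∑ J ∈ I.powerset, ((-1 : ℂ) ^ (I.card + J.card)) • slitProj J ρ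

lemma key_coeff {N : ℕ} (I : Finset (Fin N)) (hI : 3 ≤ I.card) (i j : Fin N)
    (hi : i ∈ I) (hj : j ∈ I) :
    ∑ J ∈ I.powerset, (if i ∈ J ∧ j ∈ J then ((-1 : ℂ) ^ J.card) else 0) = 0 := by
  classical
  set S : Finset (Fin N) := {i, j} with hS
  have hSsub : S ⊆ I := by
    rw [hS]; intro x hx
    simp only [Finset.mem_insert, Finset.mem_singleton] at hx
    rcases hx with rfl | rfl <;> assumption
  have hScard : S.card ≤ 2 := by
    rw [hS]
    exact (Finset.card_insert_le _ _).trans (by simp)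
  have hT : (I \ S).Nonempty := by
    rw [← Finset.card_pos, Finset.card_sdiff_of_subset hSsub]
    omega
  rw [← Finset.sum_filter]
  have hbij : ∑ J ∈ I.powerset.filter (fun J => i ∈ J ∧ j ∈ J), ((-1 : ℂ) ^ J.card)
      = ∑ K ∈ (I \ S).powerset, ((-1 : ℂ) ^ (K ∪ S).card) := by
    apply Finset.sum_nbij' (fun J => J \ S) (fun K => K ∪ S)
    · intro J hJ
      simp only [Finset.mem_filter, Finset.mem_powerset] at hJ ⊢
      exact Finset.sdiff_subset_sdiff hJ.1 (le_refl _)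
    · intro K hK
      simp only [Finset.mem_powerset] at hK
      simp only [Finset.mem_filter, Finset.mem_powerset]
      refine ⟨Finset.union_subset (hK.trans (Finset.sdiff_subset)) hSsub, ?_, ?_⟩
      · exact Finset.mem_union_right _ (by simp [hS])
      · exact Finset.mem_union_right _ (by simp [hS])
    · intro J hJ
      simp only [Finset.mem_filter, Finset.mem_powerset] at hJ
      apply Finset.sdiff_union_of_subset
      rw [hS]
      intro x hx
      simp only [Finset.mem_insert, Finset.mem_singleton] at hx
      rcases hx with rfl | rfl
      · exact hJ.2.1
      · exact hJ.2.2
    · intro K hK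
      simp only [Finset.mem_powerset] at hK
      apply Finset.union_sdiff_cancel_right
      exact Finset.disjoint_of_subset_left hK Finset.sdiff_disjoint
    · intro J hJ
      simp only [Finset.mem_filter, Finset.mem_powerset] at hJ
      congr 1
      rw [Finset.sdiff_union_of_subset]
      rw [hS]
      intro x hx
      simp only [Finset.mem_insert, Finset.mem_singleton] at hx
      rcases hx with rfl | rfl
      · exact hJ.2.1
      · exact hJ.2.2
  rw [hbij]
  have hcard : ∀ K ∈ (I \ S).powerset, ((-1 : ℂ) ^ (K ∪ S).card) = (-1 : ℂ) ^ S.card * (-1 : ℂ) ^ K.card := by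
    intro K hK
    rw [Finset.mem_powerset] at hK
    rw [Finset.card_union_of_disjoint (Finset.disjoint_of_subset_left hK Finset.sdiff_disjoint),
      pow_add, mul_comm]
  rw [Finset.sum_congr rfl hcard, ← Finset.mul_sum]
  have hz := Finset.sum_powerset_neg_one_pow_card_of_nonempty hT
  have : (∑ K ∈ (I \ S).powerset, ((-1 : ℂ) ^ K.card)) = ((∑ K ∈ (I \ S).powerset, ((-1 : ℤ) ^ K.card) : ℤ) : ℂ) := by
    push_cast; rfl
  rw [this, hz]
  simp

/-- Quantum theory has maximal order of interference 2: the slit projectors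
satisfy `P_I P_J = P_{I∩J}`, are idempotent, and all coherence operators `ω_I`
with `|I| ≥ 3` vanish. -/
theorem quantum_second_order_interference {N : ℕ} :
    (∀ (I J : Finset (Fin N)) (ρ : Matrix (Fin N) (Fin N) ℂ),
        slitProj I (slitProj J ρ) = slitProj (I ∩ J) ρ) ∧
    (∀ (I : Finset (Fin N)) (ρ : Matrix (Fin N) (Fin N) ℂ),
        slitProj I (slitProj I ρ) = slitProj I ρ) ∧
    (∀ I : Finset (Fin N), 3 ≤ I.card →
        ∀ ρ : Matrix (Fin N) (Fin N) ℂ, omegaMat I ρ = 0) := by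
  refine ⟨?_, ?_, ?_⟩
  · intro I J ρ
    ext i k
    simp only [slitProj, Matrix.of_apply, Finset.mem_inter]
    split_ifs <;> tauto
  · intro I ρ
    ext i k
    simp only [slitProj, Matrix.of_apply]
    by_cases h : i ∈ I ∧ k ∈ I <;> simp [h]
  · intro I hI ρ
    ext i j
    simp only [omegaMat, Matrix.sum_apply, Matrix.smul_apply, slitProj, Matrix.of_apply,
      Matrix.zero_apply, smul_eq_mul, pow_add, mul_ite, mul_zero, mul_one]
    by_cases hi : i ∈ I
    · by_cases hj : j ∈ I
      · have := key_coeff I hI i j hi hj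
        calc ∑ J ∈ I.powerset, (if i ∈ J ∧ j ∈ J then (-1:ℂ)^I.card * (-1:ℂ)^J.card * ρ i j else 0)
            = ((-1:ℂ)^I.card * ρ i j) * ∑ J ∈ I.powerset, (if i ∈ J ∧ j ∈ J then ((-1:ℂ)^J.card) else 0) := by
              rw [Finset.mul_sum]; apply Finset.sum_congr rfl; intro J _
              by_cases h : i ∈ J ∧ j ∈ J
              · simp only [h.1, h.2, and_self, if_true]; ring
              · simp [h]
          _ = 0 := by rw [this, mul_zero]
      · apply Finset.sum_eq_zero; intro J hJ
        rw [Finset.mem_powerset] at hJ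
        have : ¬ (i ∈ J ∧ j ∈ J) := fun h => hj (hJ h.2)
        simp [this]
    · apply Finset.sum_eq_zero; intro J hJ
      rw [Finset.mem_powerset] at hJ
      have : ¬ (i ∈ J ∧ j ∈ J) := fun h => hi (hJ h.1)
      simp [this]
end

section
/- Generalized useless-queries theorem (abstract form): Let C be a finite set of functions f : X → {0,1} with partition {C_j} and prior μ, and suppose kn classical queries are useless. Consider any 'order-k n-query algorithm': the final state is ρ_f = Σ_T Q_T(f(x_1^1),…,f(x_n^k)) where each summand depends on f through at most kn values, together with a measurement {e_s} as above. Then for every outcome s with positive probability, μ(f ∈ C_j | s) = μ(C_j) for all j. Hence n queries in a theory with k-th order interference convey no information. -/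
open Finset

lemma key_sum {X : Type*} [Fintype X] [DecidableEq X] {m : ℕ} (μ : (X → Bool) → ℝ)
    (x : Fin m → X) (g : (Fin m → Bool) → ℝ) (p : (X → Bool) → Prop)
    [DecidablePred p] :
    ∑ f ∈ Finset.univ.filter p, g (fun i => f (x i)) * μ f
      = ∑ y : Fin m → Bool, g y *
          ∑ f ∈ Finset.univ.filter (fun f => p f ∧ ∀ i, f (x i) = y i), μ f := by
  classical
  have h : ∀ y : Fin m → Bool,
      g y * ∑ f ∈ Finset.univ.filter (fun f => p f ∧ ∀ i, f (x i) = y i), μ f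
        = ∑ f ∈ Finset.univ.filter p,
            (if (fun i => f (x i)) = y then g (fun i => f (x i)) * μ f else 0) := by
    intro y
    rw [Finset.mul_sum]
    rw [show (Finset.univ.filter (fun f => p f ∧ ∀ i, f (x i) = y i))
        = (Finset.univ.filter p).filter (fun f => (fun i => f (x i)) = y) by
      ext f; simp [Finset.mem_filter, funext_iff, and_comm]]
    rw [Finset.sum_filter]
    apply Finset.sum_congr rfl
    intro f _
    split_ifs with h
    · rw [h]
    · rfl
  simp_rw [h]
  rw [Finset.sum_comm]
  apply Finset.sum_congr rfl
  intro f _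
  simp

/-- Generalized useless-queries theorem (abstract form): if `k*n` classical
queries are useless, then any order-`k` `n`-query algorithm — whose final
state `ρ_f = Σ_T Q_T(f(x¹₁),…,f(xᵏₙ))` depends on `f` through at most `k*n`
function values in each summand — followed by any measurement `{e_s}` yields,
for every outcome `s` of positive probability, posterior class probabilities
equal to the priors. Hence `n` queries in a theory with `k`-th order
interference convey no information. -/
theorem generalized_useless_queries
    {V : Type*} [AddCommGroup V] [Module ℝ V]
    {X : Type*} [Fintype X] [DecidableEq X]
    {J : Type*} [DecidableEq J]
    {τ : Type*} [Fintype τ]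
    {S : Type*} [Fintype S]
    (k n : ℕ) (cl : (X → Bool) → J) (μ : (X → Bool) → ℝ)
    (hμ0 : ∀ f, 0 ≤ μ f) (hμ1 : ∑ f : X → Bool, μ f = 1)
    (huseless : ∀ (j : J) (x : Fin (k * n) → X) (y : Fin (k * n) → Bool),
      (∑ f ∈ Finset.univ.filter
          (fun f : X → Bool => cl f = j ∧ ∀ i, f (x i) = y i), μ f) =
        (∑ f ∈ Finset.univ.filter (fun f : X → Bool => cl f = j), μ f) *
        (∑ f ∈ Finset.univ.filter (fun f : X → Bool => ∀ i, f (x i) = y i), μ f))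
    (xs : τ → Fin (k * n) → X) (Q : τ → (Fin (k * n) → Bool) → V)
    (e : S → (V →ₗ[ℝ] ℝ))
    (hpos : ∀ (s : S) (f : X → Bool), 0 ≤ e s (∑ t, Q t (fun i => f (xs t i))))
    (hnorm : ∀ f : X → Bool, ∑ s : S, e s (∑ t, Q t (fun i => f (xs t i))) = 1)
    (s : S)
    (hs : 0 < ∑ g : X → Bool, μ g * e s (∑ t, Q t (fun i => g (xs t i))))
    (j : J) :
    (∑ f ∈ Finset.univ.filter (fun f : X → Bool => cl f = j),
        e s (∑ t, Q t (fun i => f (xs t i))) * μ f) /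
        (∑ g : X → Bool, e s (∑ t, Q t (fun i => g (xs t i))) * μ g) =
      ∑ f ∈ Finset.univ.filter (fun f : X → Bool => cl f = j), μ f := by
  classical
  set M : ℝ := ∑ f ∈ Finset.univ.filter (fun f : X → Bool => cl f = j), μ f with hM
  have hsplit : ∀ f : X → Bool,
      e s (∑ t, Q t (fun i => f (xs t i))) = ∑ t, e s (Q t (fun i => f (xs t i))) :=
    fun f => map_sum (e s) _ _
  have hD : ∀ t : τ, ∑ g : X → Bool, e s (Q t (fun i => g (xs t i))) * μ g
      = ∑ y : Fin (k * n) → Bool, e s (Q t y) *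
          ∑ f ∈ Finset.univ.filter (fun f => ∀ i, f (xs t i) = y i), μ f := by
    intro t
    rw [← Finset.filter_true (Finset.univ : Finset (X → Bool)),
      key_sum μ (xs t) (fun y => e s (Q t y)) (fun _ => True)]
    simp
  have hN : ∀ t : τ,
      (∑ f ∈ Finset.univ.filter (fun f : X → Bool => cl f = j),
        e s (Q t (fun i => f (xs t i))) * μ f)
      = M * ∑ g : X → Bool, e s (Q t (fun i => g (xs t i))) * μ g := by
    intro t
    rw [key_sum μ (xs t) (fun y => e s (Q t y)) (fun f => cl f = j), hD t,
      Finset.mul_sum]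
    apply Finset.sum_congr rfl
    intro y _
    rw [huseless j (xs t) y]
    ring
  have num : (∑ f ∈ Finset.univ.filter (fun f : X → Bool => cl f = j),
        e s (∑ t, Q t (fun i => f (xs t i))) * μ f)
      = M * ∑ g : X → Bool, e s (∑ t, Q t (fun i => g (xs t i))) * μ g := by
    simp_rw [hsplit, Finset.sum_mul]
    rw [Finset.sum_comm]
    simp_rw [hN]
    rw [← Finset.mul_sum, Finset.sum_comm]
  have hD0 : (∑ g : X → Bool, e s (∑ t, Q t (fun i => g (xs t i))) * μ g) ≠ 0 := by
    have : (∑ g : X → Bool, e s (∑ t, Q t (fun i => g (xs t i))) * μ g)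
        = ∑ g : X → Bool, μ g * e s (∑ t, Q t (fun i => g (xs t i))) := by
      simp_rw [mul_comm]
    rw [this]
    exact ne_of_gt hs
  rw [num, mul_div_assoc, div_self hD0, mul_one]
end
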